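/- arXiv:2102.01622 — 3 statements merged into one kernel-verified Lean document; each statement's English description precedes it below -/
import Mathlib

section
/- The minimum over all operators M with 0 ≤ M ≤ 1 of the error probability ½(1 − tr((ρ₀−ρ₁)M)) equals ½(1 − ½‖ρ₀−ρ₁‖₁), where ‖·‖₁ is the trace norm (Helstrom–Holevo bound). -/
/-!
Diagonalise `Δ = ρ₀ - ρ₁ = U diag(μ) U*`. If `0 ≤ M ≤ 1`, the diagonal entries of `U* M U` lie
in `[0, 1]`, so `tr(ΔM) = ∑ μᵢ (U* M U)ᵢᵢ ≤ ∑ μᵢ⁺`, with equality for the spectral projection of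
`Δ` onto its nonnegative eigenvalues. Since `∑ μᵢ = tr Δ = 0`, we get
`∑ μᵢ⁺ = ½ ∑ |μᵢ| = ½ ‖Δ‖₁`, the last step because `√(Δ*Δ) = |Δ|` for Hermitian `Δ`.
-/

open scoped ComplexOrder

/-- A density matrix: positive semidefinite with unit trace. -/
def IsDensityMatrix {n : ℕ} (ρ : Matrix (Fin n) (Fin n) ℂ) : Prop :=
  ρ.PosSemidef ∧ ρ.trace = 1

/-- The trace norm of a (square complex) matrix: `tr √(AᴴA)`. -/
noncomputable def traceNorm {n : ℕ} (A : Matrix (Fin n) (Fin n) ℂ) : ℝ :=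
  (((Matrix.posSemidef_conjTranspose_mul_self A).1.eigenvectorUnitary : Matrix (Fin n) (Fin n) ℂ) *
    Matrix.diagonal ((fun x : ℝ => (x : ℂ)) ∘ Real.sqrt ∘
      (Matrix.posSemidef_conjTranspose_mul_self A).1.eigenvalues) *
    (star (Matrix.posSemidef_conjTranspose_mul_self A).1.eigenvectorUnitary :
      Matrix (Fin n) (Fin n) ℂ)).trace.re

open Matrix Unitary

theorem mul_le_posPart {α : Type*} [Ring α] [LinearOrder α] [IsStrictOrderedRing α] {x t : α}
    (ht : t ∈ Set.Icc 0 1) : x * t ≤ x⁺ := by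
  rcases le_total 0 x with hx | hx
  · calc x * t ≤ x * 1 := mul_le_mul_of_nonneg_left ht.2 hx
      _ = x := mul_one x
      _ ≤ x⁺ := le_posPart x
  · exact (mul_nonpos_of_nonpos_of_nonneg hx ht.1).trans (posPart_nonneg x)

theorem Finset.sum_posPart_eq_half_sum_abs {ι α : Type*} [Field α] [LinearOrder α]
    [IsStrictOrderedRing α] (s : Finset ι) (f : ι → α) (hf : ∑ i ∈ s, f i = 0) :
    ∑ i ∈ s, (f i)⁺ = (1 / 2) * ∑ i ∈ s, |f i| := by
  have habs : ∑ i ∈ s, |f i| = ∑ i ∈ s, (f i)⁺ + ∑ i ∈ s, (f i)⁻ := by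
    simp only [← Finset.sum_add_distrib, posPart_add_negPart]
  have hdiff : ∑ i ∈ s, f i = ∑ i ∈ s, (f i)⁺ - ∑ i ∈ s, (f i)⁻ := by
    simp only [← Finset.sum_sub_distrib, posPart_sub_negPart]
  linarith

namespace Matrix

variable {𝕜 n : Type*} [RCLike 𝕜] [Fintype n] [DecidableEq n]

theorem PosSemidef.conjStarAlgAut {M : Matrix n n 𝕜} (hM : M.PosSemidef)
    (u : unitary (Matrix n n 𝕜)) : (conjStarAlgAut 𝕜 _ u M).PosSemidef := by
  rwa [conjStarAlgAut_apply, isUnit_coe.posSemidef_star_right_conjugate_iff]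

theorem trace_conjStarAlgAut (u : unitary (Matrix n n 𝕜)) (M : Matrix n n 𝕜) :
    (conjStarAlgAut 𝕜 _ u M).trace = M.trace := by
  rw [conjStarAlgAut_apply, trace_mul_cycle, coe_star_mul_self, one_mul]

omit [Fintype n] in
theorem PosSemidef.re_diag_mem_Icc {M : Matrix n n 𝕜} (hM : M.PosSemidef)
    (hM1 : (1 - M).PosSemidef) (i : n) : RCLike.re (M i i) ∈ Set.Icc 0 1 := by
  have h1 := (RCLike.nonneg_iff.mp (hM1.diag_nonneg (i := i))).1
  simp only [sub_apply, one_apply_eq, map_sub, RCLike.one_re, sub_nonneg] at h1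
  exact ⟨(RCLike.nonneg_iff.mp hM.diag_nonneg).1, h1⟩

namespace IsHermitian

variable {A : Matrix n n 𝕜} (hA : A.IsHermitian)

theorem trace_cfc (f : ℝ → ℝ) : (hA.cfc f).trace = ∑ i, (f (hA.eigenvalues i) : 𝕜) := by
  rw [IsHermitian.cfc, trace_conjStarAlgAut, trace_diagonal]
  rfl

theorem posSemidef_cfc {f : ℝ → ℝ} (hf : ∀ i, 0 ≤ f (hA.eigenvalues i)) :
    (hA.cfc f).PosSemidef :=
  (posSemidef_diagonal_iff.mpr fun i => RCLike.ofReal_nonneg.mpr (hf i)).conjStarAlgAut _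

theorem one_sub_cfc (f : ℝ → ℝ) : 1 - hA.cfc f = hA.cfc (1 - f) := by
  rw [IsHermitian.cfc, IsHermitian.cfc, ← map_one (conjStarAlgAut 𝕜 _ hA.eigenvectorUnitary),
    ← map_sub, ← diagonal_one, diagonal_sub]
  congr! 2
  ext i
  simp

theorem mul_cfc (f : ℝ → ℝ) : A * hA.cfc f = hA.cfc (fun x => x * f x) := by
  conv_lhs => arg 1; rw [hA.spectral_theorem]
  rw [IsHermitian.cfc, IsHermitian.cfc, ← map_mul, diagonal_mul_diagonal]
  congr! 2
  ext i
  simp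

theorem trace_mul_eq_sum (M : Matrix n n 𝕜) : (A * M).trace =
    ∑ i, hA.eigenvalues i * conjStarAlgAut 𝕜 _ (star hA.eigenvectorUnitary) M i i := by
  rw [← trace_conjStarAlgAut (star hA.eigenvectorUnitary), map_mul,
    conjStarAlgAut_star_eigenvectorUnitary, trace]
  simp [diagonal_mul]

theorem re_trace_mul_le_sum_posPart {M : Matrix n n 𝕜} (hM : M.PosSemidef)
    (hM1 : (1 - M).PosSemidef) : RCLike.re (A * M).trace ≤ ∑ i, (hA.eigenvalues i)⁺ := by
  set N := conjStarAlgAut 𝕜 _ (star hA.eigenvectorUnitary) M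
  have hN1 : (1 - N).PosSemidef := by
    simpa only [N, map_sub, map_one] using hM1.conjStarAlgAut (star hA.eigenvectorUnitary)
  rw [hA.trace_mul_eq_sum, map_sum]
  refine Finset.sum_le_sum fun i _ => ?_
  rw [RCLike.re_ofReal_mul]
  exact mul_le_posPart ((hM.conjStarAlgAut _).re_diag_mem_Icc hN1 i)

theorem isGreatest_re_trace_mul :
    IsGreatest {t : ℝ | ∃ M : Matrix n n 𝕜, M.PosSemidef ∧ (1 - M).PosSemidef ∧
      t = RCLike.re (A * M).trace} (∑ i, (hA.eigenvalues i)⁺) := by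
  let f : ℝ → ℝ := fun x => if 0 ≤ x then 1 else 0
  have hf : ∀ x, f x ∈ Set.Icc 0 1 := fun x => by unfold f; split_ifs <;> norm_num
  have hmul : ∀ x, x * f x = x⁺ := fun x => by rw [posPart_eq_ite]; unfold f; split_ifs <;> simp
  refine ⟨⟨hA.cfc f, hA.posSemidef_cfc fun i => (hf _).1, ?_, ?_⟩, ?_⟩
  · rw [one_sub_cfc]
    exact hA.posSemidef_cfc fun i => sub_nonneg.mpr (hf _).2
  · simp only [mul_cfc, trace_cfc, map_sum, RCLike.ofReal_re, hmul]
  · rintro _ ⟨M, hM, hM1, rfl⟩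
    exact hA.re_trace_mul_le_sum_posPart hM hM1

end IsHermitian

end Matrix

theorem traceNorm_eq_re_trace_cfc_sqrt {n : ℕ} (A : Matrix (Fin n) (Fin n) ℂ) :
    traceNorm A = (cfc Real.sqrt (Aᴴ * A)).trace.re := by
  rw [(posSemidef_conjTranspose_mul_self A).1.cfc_eq]
  rfl

theorem Matrix.IsHermitian.traceNorm_eq_sum_abs_eigenvalues {n : ℕ}
    {A : Matrix (Fin n) (Fin n) ℂ} (hA : A.IsHermitian) :
    traceNorm A = ∑ i, |hA.eigenvalues i| := by
  have hsqrt : Real.sqrt ∘ (· ^ 2) = abs := funext Real.sqrt_sq_eq_abs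
  rw [traceNorm_eq_re_trace_cfc_sqrt, hA.eq, ← sq, ← cfc_pow_id (R := ℝ) A 2,
    ← cfc_comp Real.sqrt (· ^ 2) A, hsqrt, hA.cfc_eq, hA.trace_cfc, Complex.re_sum]
  rfl

/-- Helstrom–Holevo bound: the minimum error probability
`½ (1 − tr((ρ₀−ρ₁)M))` over all POVM elements `0 ≤ M ≤ 1` equals
`½ (1 − ½‖ρ₀−ρ₁‖₁)`. -/
theorem helstrom_holevo {n : ℕ} (ρ₀ ρ₁ : Matrix (Fin n) (Fin n) ℂ)
    (h₀ : IsDensityMatrix ρ₀) (h₁ : IsDensityMatrix ρ₁) :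
    IsLeast {p : ℝ | ∃ M : Matrix (Fin n) (Fin n) ℂ, M.PosSemidef ∧ (1 - M).PosSemidef ∧
        p = (1 / 2) * (1 - ((ρ₀ - ρ₁) * M).trace.re)}
      ((1 / 2) * (1 - (1 / 2) * traceNorm (ρ₀ - ρ₁))) := by
  have hΔ : (ρ₀ - ρ₁).IsHermitian := h₀.1.1.sub h₁.1.1
  have hsum : ∑ i, hΔ.eigenvalues i = 0 := by
    have htrace := hΔ.trace_eq_sum_eigenvalues
    rw [trace_sub, h₀.2, h₁.2, sub_self] at htrace
    simpa using congrArg Complex.re htrace.symm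
  have hnorm : (1 / 2) * traceNorm (ρ₀ - ρ₁) = ∑ i, (hΔ.eigenvalues i)⁺ := by
    rw [hΔ.traceNorm_eq_sum_abs_eigenvalues, Finset.sum_posPart_eq_half_sum_abs _ _ hsum]
  obtain ⟨⟨M, hM, hM1, hopt⟩, hbound⟩ := hΔ.isGreatest_re_trace_mul
  rw [hnorm]
  refine ⟨⟨M, hM, hM1, by rw [hopt]; rfl⟩, ?_⟩
  rintro _ ⟨M', hM', hM1', rfl⟩
  have := hbound ⟨M', hM', hM1', rfl⟩
  rw [RCLike.re_to_complex] at this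
  linarith
end

section
/- Let W₀ and W₁ be probability density functions on ℝ² given by two-dimensional Gaussians with identity-times-½ covariance (variance ½ in each coordinate), centered at (√2·α, 0) and (−√2·α, 0) respectively, with α > 0. Then ½·∫|W₀ − W₁| = erf(α√2), where erf(x) = (2/√π)∫₀ˣ e^{−t²} dt. -/
open MeasureTheory

/-- The error function `erf(x) = (2/√π) ∫₀ˣ e^{−t²} dt`. -/
noncomputable def erf (x : ℝ) : ℝ :=
  (2 / Real.sqrt Real.pi) * ∫ t in (0:ℝ)..x, Real.exp (-t ^ 2)

/-- The Wigner function of the coherent state `|α⟩` (real `α`):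
a Gaussian density on ℝ² of variance ½ per coordinate centered at `(√2 α, 0)`. -/
noncomputable def Wcoh (α : ℝ) (z : ℝ × ℝ) : ℝ :=
  (1 / Real.pi) * Real.exp (-(z.1 - Real.sqrt 2 * α) ^ 2 - z.2 ^ 2)

/-!
Both Wigner functions factor as `e^{-p²}/π` times a translate `g (x ∓ c)` of `g t = e^{-t²}`,
with `c = √2 α`, so the `p`-integral contributes `1/√π`. Since `g` is even and decreasing on
`[0, ∞)`, `|g (x - c) - g (x + c)| = g (|x| - c) - g (|x| + c)`, and the `x`-integral equals
`2 (∫_{-c}^∞ g - ∫_c^∞ g) = 2 ∫_{-c}^c g = 4 ∫_0^c g`.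
-/

open Set Real

theorem setIntegral_Ioi_comp_add_right {E : Type*} [NormedAddCommGroup E] [NormedSpace ℝ E]
    (f : ℝ → E) (a d : ℝ) :
    ∫ x in Ioi a, f (x + d) = ∫ x in Ioi (a + d), f x := by
  have := (measurePreserving_add_right volume d).setIntegral_preimage_emb
    (MeasurableEquiv.addRight d).measurableEmbedding f (Ioi (a + d))
  rwa [preimage_add_const_Ioi, add_sub_cancel_right] at this

theorem intervalIntegral_neg_self_of_even {c : ℝ} {f : ℝ → ℝ} (hf : f.Even)
    (hint : IntervalIntegrable f volume (-c) c) :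
    ∫ x in -c..c, f x = 2 * ∫ x in 0..c, f x := by
  have hneg : ∫ x in -c..0, f x = ∫ x in 0..c, f x := by
    simpa [hf.eq] using intervalIntegral.integral_comp_neg (a := -c) (b := 0) f
  have hzero : (0 : ℝ) ∈ uIcc (-c) c := by
    rcases le_total 0 c with hc | hc
    · exact mem_uIcc.2 (Or.inl ⟨by linarith, hc⟩)
    · exact mem_uIcc.2 (Or.inr ⟨hc, by linarith⟩)
  rw [← intervalIntegral.integral_add_adjacent_intervals
    (hint.mono_set (uIcc_subset_uIcc_left hzero)) (hint.mono_set (uIcc_subset_uIcc_right hzero)),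
    hneg, two_mul]

section SymmetricUnimodal

variable {f : ℝ → ℝ} (heven : f.Even) (hanti : AntitoneOn f (Ici 0))
include heven hanti

theorem apply_le_apply_of_abs_le {x y : ℝ} (h : |x| ≤ |y|) : f y ≤ f x := by
  have habs : ∀ z, f |z| = f z := fun z => by
    rcases abs_choice z with hz | hz <;> rw [hz]
    exact heven z
  rw [← habs x, ← habs y]
  exact hanti (abs_nonneg x) (abs_nonneg y) h

theorem abs_sub_comp_sub_comp_add {c : ℝ} (hc : 0 ≤ c) (x : ℝ) :
    |f (x - c) - f (x + c)| = f (|x| - c) - f (|x| + c) := by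
  rcases le_total 0 x with hx | hx
  · rw [abs_of_nonneg hx, abs_of_nonneg]
    exact sub_nonneg.2 (apply_le_apply_of_abs_le heven hanti <| sq_le_sq.1 (by nlinarith))
  · rw [abs_of_nonpos hx, abs_of_nonpos, neg_sub, show -x - c = -(x + c) by ring,
      show -x + c = -(x - c) by ring, heven, heven]
    exact sub_nonpos.2 (apply_le_apply_of_abs_le heven hanti <| sq_le_sq.1 (by nlinarith))

theorem integral_abs_comp_sub_sub_comp_add (hf : Integrable f) {c : ℝ} (hc : 0 ≤ c) :
    ∫ x, |f (x - c) - f (x + c)| = 2 * ∫ x in -c..c, f x := by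
  calc ∫ x, |f (x - c) - f (x + c)|
      = ∫ x, f (|x| - c) - f (|x| + c) := by
        simp_rw [abs_sub_comp_sub_comp_add heven hanti hc]
    _ = 2 * ∫ x in Ioi 0, f (x - c) - f (x + c) :=
        integral_comp_abs (f := fun y => f (y - c) - f (y + c))
    _ = 2 * ((∫ x in Ioi (-c), f x) - ∫ x in Ioi c, f x) := by
        rw [integral_sub (hf.comp_sub_right c).integrableOn (hf.comp_add_right c).integrableOn]
        simp_rw [sub_eq_add_neg _ c, setIntegral_Ioi_comp_add_right, zero_add]
    _ = 2 * ∫ x in -c..c, f x := by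
        rw [intervalIntegral.integral_Ioi_sub_Ioi hf.integrableOn (by linarith)]

end SymmetricUnimodal

theorem even_exp_neg_sq : (fun x : ℝ => exp (-x ^ 2)).Even := fun x => by
  simp only [neg_sq]

theorem antitoneOn_exp_neg_sq : AntitoneOn (fun x : ℝ => exp (-x ^ 2)) (Ici 0) :=
  fun _ hx _ _ hxy => exp_le_exp.2 (neg_le_neg (pow_le_pow_left₀ hx hxy 2))

theorem integrable_exp_neg_sq : Integrable (fun x : ℝ => exp (-x ^ 2)) := by
  simpa using integrable_exp_neg_mul_sq one_pos

theorem integral_exp_neg_sq : ∫ x : ℝ, exp (-x ^ 2) = √π := by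
  simpa using integral_gaussian 1

theorem abs_Wcoh_sub_Wcoh_neg (α : ℝ) (z : ℝ × ℝ) :
    |Wcoh α z - Wcoh (-α) z| =
      |exp (-(z.1 - √2 * α) ^ 2) - exp (-(z.1 + √2 * α) ^ 2)| * (exp (-z.2 ^ 2) / π) := by
  have hsplit : ∀ a b : ℝ, exp (-a ^ 2 - b ^ 2) = exp (-a ^ 2) * exp (-b ^ 2) := fun a b => by
    rw [sub_eq_add_neg, exp_add]
  simp only [Wcoh, hsplit, mul_neg, sub_neg_eq_add]
  rw [← abs_of_pos (by positivity : 0 < exp (-z.2 ^ 2) / π), ← abs_mul]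
  congr 1
  ring

/-- `½ ∫ |W₀ − W₁| = erf(α√2)` for the Wigner functions of `|±α⟩`, `α > 0`. -/
theorem half_L1_wigner_coherent (α : ℝ) (hα : 0 < α) :
    (1 / 2) * ∫ z : ℝ × ℝ, |Wcoh α z - Wcoh (-α) z| = erf (α * Real.sqrt 2) := by
  set c := √2 * α with hc_def
  have hc : 0 ≤ c := by positivity
  calc (1 / 2) * ∫ z : ℝ × ℝ, |Wcoh α z - Wcoh (-α) z|
      = (1 / 2) * ((∫ x, |exp (-(x - c) ^ 2) - exp (-(x + c) ^ 2)|) *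
          ∫ p, exp (-p ^ 2) / π) := by
        rw [Measure.volume_eq_prod, ← integral_prod_mul]
        simp_rw [abs_Wcoh_sub_Wcoh_neg, hc_def]
    _ = (1 / 2) * ((2 * ∫ x in -c..c, exp (-x ^ 2)) * (√π / π)) := by
        rw [integral_abs_comp_sub_sub_comp_add even_exp_neg_sq antitoneOn_exp_neg_sq
          integrable_exp_neg_sq hc, integral_div, integral_exp_neg_sq]
    _ = erf (α * Real.sqrt 2) := by
        rw [intervalIntegral_neg_self_of_even even_exp_neg_sq
          (integrable_exp_neg_sq.intervalIntegrable), erf, mul_comm α, ← hc_def]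
        have hπ : 0 < √π := sqrt_pos.2 pi_pos
        field_simp
        rw [sq_sqrt pi_pos.le]
end

section
/- For every E > 0, the strict inequality ln(1 + 2E) < (E+1)·ln(E+1) − E·ln(E) holds, i.e., twice the Shannon AWGN capacity ½ln(1+2E) is strictly less than the Gaussian capacity g(E) = (E+1)ln(E+1) − E ln E. -/
/-! Two tangent-line bounds `log x < x - 1`, at `x = (1+2E)/(E+1)` and at `x = E/(E+1)`, combine
to the claim: the first gives `log (1+2E) - log (E+1) < E/(E+1)`, the second (scaled by `E`) gives
`E/(E+1) < E (log (E+1) - log E)`. -/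

open Real

theorem Real.log_sub_log_lt_sub_div {a b : ℝ} (ha : 0 < a) (hb : 0 < b) (hab : a ≠ b) :
    log b - log a < (b - a) / a := by
  have hba : b / a ≠ 1 := fun h => hab ((div_eq_one_iff_eq ha.ne').mp h).symm
  calc log b - log a = log (b / a) := (log_div hb.ne' ha.ne').symm
    _ < b / a - 1 := log_lt_sub_one_of_pos (div_pos hb ha) hba
    _ = (b - a) / a := by field_simp

/-- For every `E > 0`: `ln(1+2E) < (E+1)ln(E+1) − E ln E`, i.e. twice the
Shannon AWGN capacity `½ ln(1+2E)` is strictly below the Gaussian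
capacity `g(E)`. -/
theorem awgn_lt_gaussian_capacity (E : ℝ) (hE : 0 < E) :
    Real.log (1 + 2 * E) < (E + 1) * Real.log (E + 1) - E * Real.log E := by
  have hE1 : 0 < E + 1 := by linarith
  have h_upper : log (1 + 2 * E) - log (E + 1) < E / (E + 1) := by
    have := log_sub_log_lt_sub_div hE1 (by linarith) (by linarith : E + 1 ≠ 1 + 2 * E)
    rwa [show 1 + 2 * E - (E + 1) = E by ring] at this
  have h_lower : 1 / (E + 1) < log (E + 1) - log E := by
    have := log_sub_log_lt_sub_div hE1 hE (by linarith : E + 1 ≠ E)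
    rw [show E - (E + 1) = -1 by ring, neg_div] at this
    linarith
  have h_scaled : E / (E + 1) < E * (log (E + 1) - log E) := by
    simpa only [mul_one_div] using mul_lt_mul_of_pos_left h_lower hE
  linarith
end
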